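/- arXiv:2210.16017 — 4 statements merged into one kernel-verified Lean document; each statement's English description precedes it below -/
import Mathlib

section
/- Bound-preservation (upper bound) of the 1D upwind scheme: Let N ≥ 1, Δt, Δx > 0, and let φⁿ, φⁿ⁺¹ : Fin N → ℝ, V : interior faces → ℝ satisfy the update φⁿ⁺¹ᵢ = φⁿᵢ − (Δt/Δx)(J_{i+1/2} − J_{i−1/2}) with J_{i+1/2} = V_{i+1/2}⁺·M(φⁿ⁺¹ᵢ, φⁿ⁺¹ᵢ₊₁) + V_{i+1/2}⁻·M(φⁿ⁺¹ᵢ₊₁, φⁿ⁺¹ᵢ) at interior faces and zero flux at the boundary, where M(a,b) = ((1+a)⁺(1−b)⁺)^k, k ≥ 1. If φⁿᵢ < 1 for all i, then φⁿ⁺¹ᵢ < 1 for all i. -/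
noncomputable def upwindMob (k : ℕ) (a b : ℝ) : ℝ :=
  (max (1 + a) 0 * max (1 - b) 0) ^ k

theorem upwind_scheme_upper_bound_preserving
    (N k : ℕ) (hN : 1 ≤ N) (hk : 1 ≤ k)
    (Δt Δx : ℝ) (hΔt : 0 < Δt) (hΔx : 0 < Δx)
    (φn φn1 V J : ℕ → ℝ)
    (hJ0 : J 0 = 0) (hJN : J N = 0)
    (hJ : ∀ i, 1 ≤ i → i ≤ N - 1 →
      J i = max (V i) 0 * upwindMob k (φn1 i) (φn1 (i + 1))
            + min (V i) 0 * upwindMob k (φn1 (i + 1)) (φn1 i))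
    (hupd : ∀ i, 1 ≤ i → i ≤ N → φn1 i = φn i - (Δt / Δx) * (J i - J (i - 1)))
    (hbound : ∀ i, 1 ≤ i → i ≤ N → φn i < 1) :
    ∀ i, 1 ≤ i → i ≤ N → φn1 i < 1 := by
  intro i h1 hiN
  by_contra hc
  push_neg at hc
  have hM0 : ∀ a, upwindMob k a (φn1 i) = 0 := by
    intro a
    unfold upwindMob
    have h : max (1 - φn1 i) 0 = 0 := max_eq_right (by linarith)
    rw [h, mul_zero, zero_pow (by omega)]
  have hMnn : ∀ a b, 0 ≤ upwindMob k a b := by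
    intro a b; unfold upwindMob; positivity
  have hJi : 0 ≤ J i := by
    rcases eq_or_lt_of_le hiN with h | h
    · simp [h, hJN]
    · have hle : i ≤ N - 1 := by omega
      rw [hJ i h1 hle, hM0, mul_zero, add_zero]
      exact mul_nonneg (le_max_right _ _) (hMnn _ _)
  have hJim : J (i - 1) ≤ 0 := by
    rcases eq_or_lt_of_le h1 with h | h
    · simp [← h, hJ0]
    · have h1' : 1 ≤ i - 1 := by omega
      have h2' : i - 1 ≤ N - 1 := by omega
      have hi1 : i - 1 + 1 = i := by omega
      rw [hJ (i - 1) h1' h2', hi1, hM0, mul_zero, zero_add]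
      exact mul_nonpos_of_nonpos_of_nonneg (min_le_right _ _) (hMnn _ _)
  have hup := hupd i h1 hiN
  have hb := hbound i h1 hiN
  have hpos : 0 < Δt / Δx := div_pos hΔt hΔx
  nlinarith [mul_nonneg hpos.le (sub_nonneg.mpr (le_trans hJim hJi))]
end

section
/- Bound-preservation (lower bound) of the 1D upwind scheme: under the same hypotheses as the upper-bound theorem, if φⁿᵢ > −1 for all i, then φⁿ⁺¹ᵢ > −1 for all i. -/
lemma upwindMob_nonneg (k : ℕ) (a b : ℝ) : 0 ≤ upwindMob k a b := by
  unfold upwindMob; positivity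

lemma upwindMob_zero (k : ℕ) (hk : 1 ≤ k) (a b : ℝ) (ha : 1 + a ≤ 0) :
    upwindMob k a b = 0 := by
  unfold upwindMob
  rw [max_eq_right ha, zero_mul, zero_pow (by omega)]

theorem upwind_scheme_lower_bound_preserving
    (N k : ℕ) (hN : 1 ≤ N) (hk : 1 ≤ k)
    (Δt Δx : ℝ) (hΔt : 0 < Δt) (hΔx : 0 < Δx)
    (φn φn1 V J : ℕ → ℝ)
    (hJ0 : J 0 = 0) (hJN : J N = 0)
    (hJ : ∀ i, 1 ≤ i → i ≤ N - 1 →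
      J i = max (V i) 0 * upwindMob k (φn1 i) (φn1 (i + 1))
            + min (V i) 0 * upwindMob k (φn1 (i + 1)) (φn1 i))
    (hupd : ∀ i, 1 ≤ i → i ≤ N → φn1 i = φn i - (Δt / Δx) * (J i - J (i - 1)))
    (hbound : ∀ i, 1 ≤ i → i ≤ N → φn i > -1) :
    ∀ i, 1 ≤ i → i ≤ N → φn1 i > -1 := by
  intro i hi1 hiN
  by_contra h
  push_neg at h
  have hM0 : ∀ b, upwindMob k (φn1 i) b = 0 := fun b =>
    upwindMob_zero k hk _ b (by linarith)
  have hJi : J i ≤ 0 := by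
    rcases eq_or_lt_of_le hiN with heq | hlt
    · rw [heq, hJN]
    · rw [hJ i hi1 (by omega), hM0, mul_zero, zero_add]
      have h1 : min (V i) 0 ≤ 0 := min_le_right _ _
      have h2 := upwindMob_nonneg k (φn1 (i + 1)) (φn1 i)
      nlinarith
  have hJim : 0 ≤ J (i - 1) := by
    rcases eq_or_lt_of_le hi1 with heq | hlt
    · rw [← heq]; simp [hJ0]
    · have hi' : i - 1 + 1 = i := by omega
      rw [hJ (i - 1) (by omega) (by omega), hi', hM0, mul_zero, add_zero]
      have h1 : (0:ℝ) ≤ max (V (i - 1)) 0 := le_max_right _ _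
      have h2 := upwindMob_nonneg k (φn1 (i - 1)) (φn1 i)
      positivity
  have hq : 0 < Δt / Δx := div_pos hΔt hΔx
  have := hupd i hi1 hiN
  have hb := hbound i hi1 hiN
  nlinarith
end

section
/- Sharper discrete energy estimate: under the hypotheses of the discrete energy dissipation theorem, (Eⁿ⁺¹ − Eⁿ)/Δx ≤ −Δt·∑_{i=1}^{N−1} min(M(φⁿ⁺¹ᵢ,φⁿ⁺¹ᵢ₊₁), M(φⁿ⁺¹ᵢ₊₁,φⁿ⁺¹ᵢ))·|V_{i+1/2}|². -/
noncomputable def discreteEnergy (N : ℕ) (Δx ε : ℝ) (F : ℝ → ℝ) (ψ : ℕ → ℝ) : ℝ :=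
  Δx * ∑ i ∈ Finset.Icc 1 (N - 1), (ε ^ 2 / 2) * ((ψ (i + 1) - ψ i) / Δx) ^ 2
    + Δx * ∑ i ∈ Finset.Icc 1 N, F (ψ i)

/-!
The gradient part of the energy is convex, so its increment is bounded by the linearization
`ε² ∑ ∇φⁿ⁺¹ · ∇(φⁿ⁺¹ - φⁿ)`, while the SAV relation linearizes the potential part exactly.
Summing by parts against the Neumann Laplacian turns this into `∑ μᵢ (φⁿ⁺¹ᵢ - φⁿᵢ)`, and
summing by parts once more against the conservative update (zero boundary fluxes) gives
`-Δt ∑ V_{i+1/2} J_{i+1/2}`. The upwind flux satisfies `V J ≥ min(M⁺, M⁻) V²`.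
-/

open Finset

lemma sum_Icc_mul_sub_pred (N : ℕ) (m J : ℕ → ℝ) :
    ∑ i ∈ Icc 1 (N + 1), m i * (J i - J (i - 1))
      = m (N + 1) * J (N + 1) - m 1 * J 0 - ∑ i ∈ Icc 1 N, (m (i + 1) - m i) * J i := by
  induction N with
  | zero => simp; ring
  | succ n ih =>
    rw [sum_Icc_succ_top (by omega), ih, sum_Icc_succ_top (by omega)]
    simp only [Nat.add_sub_cancel]
    ring

lemma sum_Icc_mul_sub_pred_of_eq_zero (N : ℕ) (m J : ℕ → ℝ) (hJ0 : J 0 = 0) (hJN : J N = 0) :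
    ∑ i ∈ Icc 1 N, m i * (J i - J (i - 1)) = -∑ i ∈ Icc 1 (N - 1), (m (i + 1) - m i) * J i := by
  rcases N with _ | M
  · simp
  · rw [sum_Icc_mul_sub_pred, hJ0, hJN, Nat.add_sub_cancel]
    ring

lemma sq_sub_sq_le_two_mul_mul_sub (a b : ℝ) : a ^ 2 - b ^ 2 ≤ 2 * a * (a - b) := by
  nlinarith [sq_nonneg (a - b)]

lemma discreteEnergy_sub_div_le {Δx : ℝ} (hΔx : Δx ≠ 0) (N : ℕ) (ε : ℝ) (F : ℝ → ℝ)
    (ψ χ : ℕ → ℝ) :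
    (discreteEnergy N Δx ε F ψ - discreteEnergy N Δx ε F χ) / Δx
      ≤ ε ^ 2 * ∑ i ∈ Icc 1 (N - 1),
            (ψ (i + 1) - ψ i) / Δx ^ 2 * ((ψ (i + 1) - χ (i + 1)) - (ψ i - χ i))
        + ∑ i ∈ Icc 1 N, (F (ψ i) - F (χ i)) := by
  have hdiff : (discreteEnergy N Δx ε F ψ - discreteEnergy N Δx ε F χ) / Δx
      = ∑ i ∈ Icc 1 (N - 1),
          ε ^ 2 / 2 * (((ψ (i + 1) - ψ i) / Δx) ^ 2 - ((χ (i + 1) - χ i) / Δx) ^ 2)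
        + ∑ i ∈ Icc 1 N, (F (ψ i) - F (χ i)) := by
    simp only [discreteEnergy, mul_sub, sum_sub_distrib]
    field_simp
    ring
  rw [hdiff, mul_sum]
  refine add_le_add_left (sum_le_sum fun i _ => ?_) _
  calc _ ≤ ε ^ 2 / 2 * (2 * ((ψ (i + 1) - ψ i) / Δx)
            * ((ψ (i + 1) - ψ i) / Δx - (χ (i + 1) - χ i) / Δx)) := by
        gcongr
        exact sq_sub_sq_le_two_mul_mul_sub _ _
    _ = _ := by field_simp; ring

lemma sum_neumannLap_mul_eq {N : ℕ} (hN : 2 ≤ N) {Δx : ℝ} (ψ lap d : ℕ → ℝ)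
    (hlapI : ∀ i, 2 ≤ i → i ≤ N - 1 → lap i = (ψ (i + 1) - 2 * ψ i + ψ (i - 1)) / Δx ^ 2)
    (hlap1 : lap 1 = (ψ 2 - ψ 1) / Δx ^ 2)
    (hlapN : lap N = (ψ (N - 1) - ψ N) / Δx ^ 2) :
    ∑ i ∈ Icc 1 N, lap i * d i
      = -∑ i ∈ Icc 1 (N - 1), (ψ (i + 1) - ψ i) / Δx ^ 2 * (d (i + 1) - d i) := by
  -- The Neumann closure says that `lap` is the backward difference of the zero extension of `∇ψ`.
  set g : ℕ → ℝ := fun i => if i ∈ Icc 1 (N - 1) then (ψ (i + 1) - ψ i) / Δx ^ 2 else 0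
  have hlap : ∀ i ∈ Icc 1 N, lap i = g i - g (i - 1) := by
    intro i hi
    rw [mem_Icc] at hi
    rcases (by omega : i = 1 ∨ i = N ∨ 2 ≤ i ∧ i ≤ N - 1) with rfl | rfl | ⟨h2, hN1⟩
    · simp only [g, mem_Icc, hlap1]
      rw [if_pos (by omega), if_neg (by omega)]
      norm_num
    · simp only [g, mem_Icc, hlapN]
      rw [if_neg (by omega), if_pos (by omega), Nat.sub_add_cancel (by omega)]
      ring
    · simp only [g, mem_Icc, hlapI i h2 hN1]
      rw [if_pos (by omega), if_pos (by omega), Nat.sub_add_cancel (by omega)]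
      ring
  calc ∑ i ∈ Icc 1 N, lap i * d i = ∑ i ∈ Icc 1 N, d i * (g i - g (i - 1)) :=
        sum_congr rfl fun i hi => by rw [hlap i hi, mul_comm]
    _ = -∑ i ∈ Icc 1 (N - 1), (d (i + 1) - d i) * g i :=
        sum_Icc_mul_sub_pred_of_eq_zero N d g (by simp [g]) (by simp [g]; omega)
    _ = _ := by
        congr 1
        refine sum_congr rfl fun i hi => ?_
        rw [show g i = (ψ (i + 1) - ψ i) / Δx ^ 2 from if_pos hi, mul_comm]

lemma sum_mul_upwind_update_eq {N : ℕ} {Δt Δx : ℝ} (hΔx : Δx ≠ 0) (μ V J d : ℕ → ℝ)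
    (hV : ∀ i, 1 ≤ i → i ≤ N - 1 → V i = -(μ (i + 1) - μ i) / Δx)
    (hJ0 : J 0 = 0) (hJN : J N = 0)
    (hupd : ∀ i, 1 ≤ i → i ≤ N → d i = -(Δt / Δx) * (J i - J (i - 1))) :
    ∑ i ∈ Icc 1 N, μ i * d i = -Δt * ∑ i ∈ Icc 1 (N - 1), V i * J i := by
  calc ∑ i ∈ Icc 1 N, μ i * d i = -(Δt / Δx) * ∑ i ∈ Icc 1 N, μ i * (J i - J (i - 1)) := by
        rw [mul_sum]
        refine sum_congr rfl fun i hi => ?_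
        rw [mem_Icc] at hi
        rw [hupd i hi.1 hi.2]
        ring
    _ = Δt / Δx * ∑ i ∈ Icc 1 (N - 1), (μ (i + 1) - μ i) * J i := by
        rw [sum_Icc_mul_sub_pred_of_eq_zero N μ J hJ0 hJN]
        ring
    _ = _ := by
        rw [mul_sum, mul_sum]
        refine sum_congr rfl fun i hi => ?_
        rw [mem_Icc] at hi
        rw [hV i hi.1 hi.2]
        field_simp

lemma min_mul_sq_le_mul_upwind (P Q v : ℝ) :
    min P Q * v ^ 2 ≤ v * (max v 0 * P + min v 0 * Q) := by
  rcases le_total 0 v with hv | hv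
  · rw [max_eq_left hv, min_eq_right hv]
    nlinarith [min_le_left P Q, sq_nonneg v]
  · rw [max_eq_right hv, min_eq_left hv]
    nlinarith [min_le_right P Q, sq_nonneg v]

theorem upwind_sav_sharper_energy_estimate_general
    (N k : ℕ) (hN : 2 ≤ N)
    (Δt Δx ε : ℝ) (hΔt : 0 < Δt) (hΔx : 0 < Δx)
    (F F' : ℝ → ℝ)
    (φn φn1 μ V J lap : ℕ → ℝ) (ξ : ℝ)
    (hlapI : ∀ i, 2 ≤ i → i ≤ N - 1 →
      lap i = (φn1 (i + 1) - 2 * φn1 i + φn1 (i - 1)) / Δx ^ 2)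
    (hlap1 : lap 1 = (φn1 2 - φn1 1) / Δx ^ 2)
    (hlapN : lap N = (φn1 (N - 1) - φn1 N) / Δx ^ 2)
    (hμ : ∀ i, 1 ≤ i → i ≤ N → μ i = -ε ^ 2 * lap i + ξ * F' (φn1 i))
    (hV : ∀ i, 1 ≤ i → i ≤ N - 1 → V i = -(μ (i + 1) - μ i) / Δx)
    (hJ0 : J 0 = 0) (hJN : J N = 0)
    (hJ : ∀ i, 1 ≤ i → i ≤ N - 1 →
      J i = max (V i) 0 * upwindMob k (φn1 i) (φn1 (i + 1))
            + min (V i) 0 * upwindMob k (φn1 (i + 1)) (φn1 i))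
    (hupd : ∀ i, 1 ≤ i → i ≤ N → φn1 i - φn i = -(Δt / Δx) * (J i - J (i - 1)))
    (hSAV : ∑ i ∈ Finset.Icc 1 N, (F (φn1 i) - F (φn i))
      = ξ * ∑ i ∈ Finset.Icc 1 N, F' (φn1 i) * (φn1 i - φn i)) :
    (discreteEnergy N Δx ε F φn1 - discreteEnergy N Δx ε F φn) / Δx
      ≤ -Δt * ∑ i ∈ Finset.Icc 1 (N - 1),
          min (upwindMob k (φn1 i) (φn1 (i + 1))) (upwindMob k (φn1 (i + 1)) (φn1 i))
            * (V i) ^ 2 := by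
  have hμsum : ∑ i ∈ Icc 1 N, μ i * (φn1 i - φn i)
      = -ε ^ 2 * ∑ i ∈ Icc 1 N, lap i * (φn1 i - φn i)
        + ξ * ∑ i ∈ Icc 1 N, F' (φn1 i) * (φn1 i - φn i) := by
    rw [mul_sum, mul_sum, ← sum_add_distrib]
    refine sum_congr rfl fun i hi => ?_
    rw [mem_Icc] at hi
    rw [hμ i hi.1 hi.2]
    ring
  have hflux : ∀ i ∈ Icc 1 (N - 1),
      min (upwindMob k (φn1 i) (φn1 (i + 1))) (upwindMob k (φn1 (i + 1)) (φn1 i)) * V i ^ 2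
        ≤ V i * J i := fun i hi => by
    rw [mem_Icc] at hi
    rw [hJ i hi.1 hi.2]
    exact min_mul_sq_le_mul_upwind _ _ _
  calc (discreteEnergy N Δx ε F φn1 - discreteEnergy N Δx ε F φn) / Δx
      ≤ ε ^ 2 * ∑ i ∈ Icc 1 (N - 1), (φn1 (i + 1) - φn1 i) / Δx ^ 2
            * ((φn1 (i + 1) - φn (i + 1)) - (φn1 i - φn i))
        + ∑ i ∈ Icc 1 N, (F (φn1 i) - F (φn i)) :=
        discreteEnergy_sub_div_le hΔx.ne' N ε F φn1 φn
    _ = ∑ i ∈ Icc 1 N, μ i * (φn1 i - φn i) := by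
        rw [hSAV, hμsum, sum_neumannLap_mul_eq hN φn1 lap _ hlapI hlap1 hlapN]
        ring
    _ = -Δt * ∑ i ∈ Icc 1 (N - 1), V i * J i :=
        sum_mul_upwind_update_eq hΔx.ne' μ V J _ hV hJ0 hJN hupd
    _ ≤ _ := mul_le_mul_of_nonpos_left (sum_le_sum hflux) (neg_nonpos.2 hΔt.le)

theorem upwind_sav_sharper_energy_estimate
    (N k : ℕ) (hN : 2 ≤ N) (hk : 1 ≤ k)
    (Δt Δx ε : ℝ) (hΔt : 0 < Δt) (hΔx : 0 < Δx) (hε : 0 < ε)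
    (F F' : ℝ → ℝ) (hF : ∀ x, HasDerivAt F (F' x) x)
    (φn φn1 μ V J lap : ℕ → ℝ) (ξ : ℝ)
    (hlapI : ∀ i, 2 ≤ i → i ≤ N - 1 →
      lap i = (φn1 (i + 1) - 2 * φn1 i + φn1 (i - 1)) / Δx ^ 2)
    (hlap1 : lap 1 = (φn1 2 - φn1 1) / Δx ^ 2)
    (hlapN : lap N = (φn1 (N - 1) - φn1 N) / Δx ^ 2)
    (hμ : ∀ i, 1 ≤ i → i ≤ N → μ i = -ε ^ 2 * lap i + ξ * F' (φn1 i))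
    (hV : ∀ i, 1 ≤ i → i ≤ N - 1 → V i = -(μ (i + 1) - μ i) / Δx)
    (hJ0 : J 0 = 0) (hJN : J N = 0)
    (hJ : ∀ i, 1 ≤ i → i ≤ N - 1 →
      J i = max (V i) 0 * upwindMob k (φn1 i) (φn1 (i + 1))
            + min (V i) 0 * upwindMob k (φn1 (i + 1)) (φn1 i))
    (hupd : ∀ i, 1 ≤ i → i ≤ N → φn1 i - φn i = -(Δt / Δx) * (J i - J (i - 1)))
    (hSAV : ∑ i ∈ Finset.Icc 1 N, (F (φn1 i) - F (φn i))
      = ξ * ∑ i ∈ Finset.Icc 1 N, F' (φn1 i) * (φn1 i - φn i)) :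
    (discreteEnergy N Δx ε F φn1 - discreteEnergy N Δx ε F φn) / Δx
      ≤ -Δt * ∑ i ∈ Finset.Icc 1 (N - 1),
          min (upwindMob k (φn1 i) (φn1 (i + 1))) (upwindMob k (φn1 (i + 1)) (φn1 i))
            * (V i) ^ 2 :=
  upwind_sav_sharper_energy_estimate_general N k hN Δt Δx ε hΔt hΔx F F' φn φn1 μ V J lap ξ hlapI
    hlap1 hlapN hμ hV hJ0 hJN hJ hupd hSAV
end

section
/- Generalized bound preservation for degenerate mobility M(φ) = (β² − φ²)^k: in the 1D upwind scheme with mobility M(a,b) = ((β+a)⁺(β−b)⁺)^k, β > 0, k ≥ 1, if |φⁿᵢ| < β for all i then |φⁿ⁺¹ᵢ| < β for all i. -/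
noncomputable def upwindMobβ (β : ℝ) (k : ℕ) (a b : ℝ) : ℝ :=
  (max (β + a) 0 * max (β - b) 0) ^ k

lemma upwindMobβ_nonneg (β : ℝ) (k : ℕ) (a b : ℝ) : 0 ≤ upwindMobβ β k a b :=
  pow_nonneg (mul_nonneg (le_max_right _ _) (le_max_right _ _)) _

lemma upwindMobβ_zero_right (β : ℝ) (k : ℕ) (hk : 1 ≤ k) (a b : ℝ) (hb : β ≤ b) :
    upwindMobβ β k a b = 0 := by
  unfold upwindMobβ
  have : max (β - b) 0 = 0 := max_eq_right (by linarith)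
  rw [this, mul_zero, zero_pow (by omega)]

lemma upwindMobβ_zero_left (β : ℝ) (k : ℕ) (hk : 1 ≤ k) (a b : ℝ) (ha : a ≤ -β) :
    upwindMobβ β k a b = 0 := by
  unfold upwindMobβ
  have : max (β + a) 0 = 0 := max_eq_right (by linarith)
  rw [this, zero_mul, zero_pow (by omega)]

theorem upwind_scheme_generalized_bound_preserving
    (β : ℝ) (hβ : 0 < β) (N k : ℕ) (hN : 1 ≤ N) (hk : 1 ≤ k)
    (Δt Δx : ℝ) (hΔt : 0 < Δt) (hΔx : 0 < Δx)
    (φn φn1 V J : ℕ → ℝ)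
    (hJ0 : J 0 = 0) (hJN : J N = 0)
    (hJ : ∀ i, 1 ≤ i → i ≤ N - 1 →
      J i = max (V i) 0 * upwindMobβ β k (φn1 i) (φn1 (i + 1))
            + min (V i) 0 * upwindMobβ β k (φn1 (i + 1)) (φn1 i))
    (hupd : ∀ i, 1 ≤ i → i ≤ N → φn1 i = φn i - (Δt / Δx) * (J i - J (i - 1)))
    (hbound : ∀ i, 1 ≤ i → i ≤ N → |φn i| < β) :
    ∀ i, 1 ≤ i → i ≤ N → |φn1 i| < β := by
  intro i hi hiN
  by_contra hcon
  push_neg at hcon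
  have hc : 0 < Δt / Δx := div_pos hΔt hΔx
  have hbn := hbound i hi hiN
  rw [abs_lt] at hbn
  have hupd' := hupd i hi hiN
  rcases le_abs.mp hcon with hge | hle
  · -- φn1 i ≥ β
    have hJi : 0 ≤ J i := by
      rcases eq_or_lt_of_le hiN with rfl | hlt
      · rw [hJN]
      · rw [hJ i hi (by omega), upwindMobβ_zero_right β k hk _ _ hge, mul_zero, add_zero]
        exact mul_nonneg (le_max_right _ _) (upwindMobβ_nonneg _ _ _ _)
    have hJim : J (i - 1) ≤ 0 := by
      rcases eq_or_lt_of_le hi with h1 | h2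
      · rw [← h1]; simp [hJ0]
      · have h1i : 1 ≤ i - 1 := by omega
        have hiN' : i - 1 ≤ N - 1 := by omega
        have hs : i - 1 + 1 = i := by omega
        rw [hJ (i - 1) h1i hiN', hs, upwindMobβ_zero_right β k hk _ _ hge, mul_zero, zero_add]
        exact mul_nonpos_of_nonpos_of_nonneg (min_le_right _ _) (upwindMobβ_nonneg _ _ _ _)
    nlinarith [mul_nonneg hc.le (sub_nonneg.mpr (hJim.trans hJi))]
  · -- φn1 i ≤ -β
    have hle' : φn1 i ≤ -β := by linarith
    have hJi : J i ≤ 0 := by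
      rcases eq_or_lt_of_le hiN with rfl | hlt
      · rw [hJN]
      · rw [hJ i hi (by omega), upwindMobβ_zero_left β k hk _ _ hle', mul_zero, zero_add]
        exact mul_nonpos_of_nonpos_of_nonneg (min_le_right _ _) (upwindMobβ_nonneg _ _ _ _)
    have hJim : 0 ≤ J (i - 1) := by
      rcases eq_or_lt_of_le hi with h1 | h2
      · rw [← h1]; simp [hJ0]
      · have h1i : 1 ≤ i - 1 := by omega
        have hiN' : i - 1 ≤ N - 1 := by omega
        have hs : i - 1 + 1 = i := by omega
        rw [hJ (i - 1) h1i hiN', hs, upwindMobβ_zero_left β k hk _ _ hle', mul_zero, add_zero]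
        exact mul_nonneg (le_max_right _ _) (upwindMobβ_nonneg _ _ _ _)
    nlinarith [mul_nonpos_of_nonneg_of_nonpos hc.le (sub_nonpos.mpr (hJi.trans hJim))]
end
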